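/- The integral over ℝ³ of V·ΛW is nonzero, where V = 5W⁴ and ΛW = (1/2)W + x·∇W. -/

import Mathlib

open MeasureTheory

/-- The ground state soliton `W(x) = √3 (1 + 3|x|²)^(-1/2)` on `ℝ³`. -/
noncomputable def W (x : Fin 3 → ℝ) : ℝ :=
  Real.sqrt 3 * (1 + 3 * ∑ i, x i ^ 2) ^ (-(1 : ℝ) / 2)

/-- The `i`-th partial derivative of a function on `ℝ³`. -/
noncomputable def pderiv3 (i : Fin 3) (f : (Fin 3 → ℝ) → ℝ) (x : Fin 3 → ℝ) : ℝ :=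
  fderiv ℝ f x (Pi.single i 1)

/-- The Euclidean Laplacian on `ℝ³`, `Δf = ∑ᵢ ∂ᵢ∂ᵢ f`. -/
noncomputable def laplacian3 (f : (Fin 3 → ℝ) → ℝ) (x : Fin 3 → ℝ) : ℝ :=
  ∑ i, pderiv3 i (pderiv3 i f) x

/-- `ΛW = (1/2)W + x·∇W`, the scaling derivative of the soliton. -/
noncomputable def LamW (x : Fin 3 → ℝ) : ℝ :=
  (1 / 2) * W x + ∑ i, x i * pderiv3 i W x

/-!
Write `s = |x|²` and `p(s) = (1 + 3s)^(-1/2)`, so that `W = √3 p(s)`. Since `p' = -(3/2) p³` and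
`p² (1 + 3s) = 1`, one gets `ΛW = (√3/2)(1 - 3s) p³` and `V ΛW = (45√3/2)(1 - 3s) p⁷`. In polar
coordinates the integral is a positive multiple of `∫₀^∞ r² (1 - 3r²) p(r²)⁷ dr`. The substitution
`t = r p(r²)`, for which `dt = p(r²)³ dr` and `p(r²)² = 1 - 3t²`, turns this into
`∫₀^{1/√3} t² (1 - 6t²) dt = -√3/135`.
-/

open Real Set Filter Topology

section SumSq

variable {ι : Type*} [Fintype ι]

theorem hasFDerivAt_sum_sq (x : ι → ℝ) :
    HasFDerivAt (fun y : ι → ℝ => ∑ i, y i ^ 2)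
      (∑ i, (2 * x i) • (ContinuousLinearMap.proj i : (ι → ℝ) →L[ℝ] ℝ)) x := by
  refine HasFDerivAt.fun_sum fun i _ => ?_
  simpa [mul_comm, Function.comp_def] using (hasDerivAt_pow 2 (x i)).comp_hasFDerivAt x
    (ContinuousLinearMap.proj i : (ι → ℝ) →L[ℝ] ℝ).hasFDerivAt

theorem integral_fun_sum_sq [Nonempty ι] {F : Type*} [NormedAddCommGroup F] [NormedSpace ℝ F]
    (f : ℝ → F) :
    ∫ x : ι → ℝ, f (∑ i, x i ^ 2) =
      Fintype.card ι • volume.real (Metric.ball (0 : EuclideanSpace ℝ ι) 1) •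
        ∫ r in Ioi (0 : ℝ), r ^ (Fintype.card ι - 1) • f (r ^ 2) := by
  rw [← (EuclideanSpace.volume_preserving_symm_measurableEquiv_toLp ι).integral_comp'
    fun x => f (∑ i, x i ^ 2)]
  simp_rw [← finrank_euclideanSpace (𝕜 := ℝ) (ι := ι)]
  rw [← integral_fun_norm_addHaar volume fun r => f (r ^ 2)]
  simp_rw [EuclideanSpace.real_norm_sq_eq]
  rfl

end SumSq

section Pderiv3

variable {φ : ℝ → ℝ} {φ' : ℝ} {x : Fin 3 → ℝ}

theorem pderiv3_comp_sum_sq (hφ : HasDerivAt φ φ' (∑ j, x j ^ 2)) (i : Fin 3) :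
    pderiv3 i (fun y => φ (∑ j, y j ^ 2)) x = 2 * x i * φ' := by
  rw [pderiv3, HasFDerivAt.fderiv (f := fun y => φ (∑ j, y j ^ 2))
    (hφ.comp_hasFDerivAt x (hasFDerivAt_sum_sq x))]
  simp only [smul_apply, sum_apply,
    ContinuousLinearMap.proj_apply, Pi.single_apply, smul_eq_mul, mul_ite, mul_one, mul_zero,
    Finset.sum_ite_eq', Finset.mem_univ, ↓reduceIte]
  ring

theorem sum_mul_pderiv3_comp_sum_sq (hφ : HasDerivAt φ φ' (∑ j, x j ^ 2)) :
    ∑ i, x i * pderiv3 i (fun y => φ (∑ j, y j ^ 2)) x = 2 * (∑ j, x j ^ 2) * φ' := by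
  simp_rw [pderiv3_comp_sum_sq hφ, Finset.mul_sum, Finset.sum_mul]
  exact Finset.sum_congr rfl fun i _ => by ring

end Pderiv3

noncomputable def bubbleProfile (s : ℝ) : ℝ := (1 + 3 * s) ^ (-(1 : ℝ) / 2)

section BubbleProfile

variable {s : ℝ}

theorem bubbleProfile_pos (hs : 0 < 1 + 3 * s) : 0 < bubbleProfile s :=
  rpow_pos_of_pos hs _

theorem bubbleProfile_sq_mul (hs : 0 < 1 + 3 * s) : bubbleProfile s ^ 2 * (1 + 3 * s) = 1 := by
  rw [bubbleProfile, ← rpow_natCast, ← rpow_mul hs.le]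
  norm_num [rpow_neg_one, inv_mul_cancel₀ hs.ne']

theorem hasDerivAt_bubbleProfile (hs : 0 < 1 + 3 * s) :
    HasDerivAt bubbleProfile (-(3 / 2) * bubbleProfile s ^ 3) s := by
  have h : HasDerivAt bubbleProfile
      (3 * 1 * (-(1 : ℝ) / 2) * (1 + 3 * s) ^ (-(1 : ℝ) / 2 - 1)) s :=
    ((hasDerivAt_id s).const_mul 3 |>.const_add 1).rpow_const (Or.inl hs.ne')
  convert h using 1
  rw [bubbleProfile, ← rpow_natCast, ← rpow_mul hs.le]
  norm_num

end BubbleProfile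

theorem W_eq_bubbleProfile : W = fun x => √3 * bubbleProfile (∑ i, x i ^ 2) := rfl

theorem LamW_eq (x : Fin 3 → ℝ) :
    LamW x = √3 / 2 * ((1 - 3 * ∑ i, x i ^ 2) * bubbleProfile (∑ i, x i ^ 2) ^ 3) := by
  have hs : 0 < 1 + 3 * ∑ i, x i ^ 2 := by positivity
  have hW : HasDerivAt (fun s => √3 * bubbleProfile s)
      (√3 * (-(3 / 2) * bubbleProfile (∑ i, x i ^ 2) ^ 3)) (∑ i, x i ^ 2) :=
    (hasDerivAt_bubbleProfile hs).const_mul _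
  rw [LamW, W_eq_bubbleProfile, sum_mul_pderiv3_comp_sum_sq hW]
  linear_combination (-(√3 / 2) * bubbleProfile (∑ i, x i ^ 2)) * bubbleProfile_sq_mul hs

theorem V_mul_LamW_eq (x : Fin 3 → ℝ) :
    5 * W x ^ 4 * LamW x =
      45 * √3 / 2 * ((1 - 3 * ∑ i, x i ^ 2) * bubbleProfile (∑ i, x i ^ 2) ^ 7) := by
  have h3 : √3 ^ 4 = 9 := by
    rw [show (4 : ℕ) = 2 * 2 from rfl, pow_mul, sq_sqrt zero_le_three]; norm_num
  rw [LamW_eq, W_eq_bubbleProfile, mul_pow, h3]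
  ring

theorem hasDerivAt_mul_bubbleProfile_sq (r : ℝ) :
    HasDerivAt (fun r => r * bubbleProfile (r ^ 2)) (bubbleProfile (r ^ 2) ^ 3) r := by
  have hs : 0 < 1 + 3 * r ^ 2 := by positivity
  refine ((hasDerivAt_id' r).mul (HasDerivAt.comp (h := fun r : ℝ => r ^ 2) r
    (hasDerivAt_bubbleProfile hs) (hasDerivAt_pow 2 r))).congr_deriv ?_
  simp only [Function.comp_apply, one_mul, Nat.cast_ofNat, Nat.add_one_sub_one, pow_one]
  linear_combination (-bubbleProfile (r ^ 2)) * bubbleProfile_sq_mul hs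

theorem tendsto_mul_bubbleProfile_sq :
    Tendsto (fun r => r * bubbleProfile (r ^ 2)) atTop (𝓝 (√3 / 3)) := by
  have hquot : Tendsto (fun r : ℝ => ((r ^ 2)⁻¹ + 3)⁻¹) atTop (𝓝 (1 / 3)) := by
    simpa using ((tendsto_pow_atTop (α := ℝ) two_ne_zero).inv_tendsto_atTop.add_const 3).inv₀
      (by norm_num)
  have hlim : √(1 / 3) = √3 / 3 := by
    rw [show (1 / 3 : ℝ) = 3 / 3 ^ 2 by norm_num, sqrt_div' _ (by norm_num), sqrt_sq zero_le_three]
  rw [← hlim]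
  refine ((continuous_sqrt.tendsto _).comp hquot).congr' ?_
  filter_upwards [eventually_gt_atTop 0] with r hr
  have hs : 0 < 1 + 3 * r ^ 2 := by positivity
  rw [Function.comp_apply, ← sqrt_sq (mul_pos hr (bubbleProfile_pos hs)).le]
  congr 1
  rw [mul_pow, eq_inv_of_mul_eq_one_left (bubbleProfile_sq_mul hs)]
  field_simp

noncomputable def radialIntegrand (r : ℝ) : ℝ :=
  r ^ 2 * ((1 - 3 * r ^ 2) * bubbleProfile (r ^ 2) ^ 7)

noncomputable def radialPrimitive (r : ℝ) : ℝ :=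
  (r * bubbleProfile (r ^ 2)) ^ 3 / 3 - 6 * (r * bubbleProfile (r ^ 2)) ^ 5 / 5

theorem hasDerivAt_radialPrimitive (r : ℝ) :
    HasDerivAt radialPrimitive (radialIntegrand r) r := by
  have hs : 0 < 1 + 3 * r ^ 2 := by positivity
  have ht := hasDerivAt_mul_bubbleProfile_sq r
  refine (((ht.pow 3).div_const 3).sub (((ht.pow 5).const_mul 6).div_const 5)).congr_deriv ?_
  rw [radialIntegrand]
  push_cast
  linear_combination (-r ^ 2 * bubbleProfile (r ^ 2) ^ 5) * bubbleProfile_sq_mul hs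

theorem tendsto_radialPrimitive : Tendsto radialPrimitive atTop (𝓝 (-√3 / 135)) := by
  have h : Tendsto radialPrimitive atTop (𝓝 ((√3 / 3) ^ 3 / 3 - 6 * (√3 / 3) ^ 5 / 5)) :=
    ((tendsto_mul_bubbleProfile_sq.pow 3).div_const 3).sub
    (((tendsto_mul_bubbleProfile_sq.pow 5).const_mul 6).div_const 5)
  convert h using 2
  have h3 : √3 ^ 2 = 3 := sq_sqrt zero_le_three
  linear_combination (-√3 / 81 + 6 * √3 * (√3 ^ 2 + 3) / 1215) * h3

theorem continuous_radialIntegrand : Continuous radialIntegrand := by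
  have hp : Continuous fun r : ℝ => bubbleProfile (r ^ 2) :=
    continuous_iff_continuousAt.2 fun r => (HasDerivAt.comp (h := fun r : ℝ => r ^ 2) r
      (hasDerivAt_bubbleProfile (by positivity)) (hasDerivAt_pow 2 r)).continuousAt
  unfold radialIntegrand
  fun_prop

theorem radialIntegrand_nonpos {r : ℝ} (hr : 1 < r) : radialIntegrand r ≤ 0 := by
  have hp := bubbleProfile_pos (s := r ^ 2) (by positivity)
  have hneg : 1 - 3 * r ^ 2 ≤ 0 := by nlinarith
  exact mul_nonpos_of_nonneg_of_nonpos (sq_nonneg r)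
    (mul_nonpos_of_nonpos_of_nonneg hneg (pow_nonneg hp.le 7))

theorem integrableOn_radialIntegrand : IntegrableOn radialIntegrand (Ioi 0) := by
  rw [← Ioc_union_Ioi_eq_Ioi zero_le_one]
  exact continuous_radialIntegrand.integrableOn_Ioc.union
    (integrableOn_Ioi_deriv_of_nonpos' (fun r _ => hasDerivAt_radialPrimitive r)
      (fun _ hr => radialIntegrand_nonpos hr) tendsto_radialPrimitive)

theorem integral_radialIntegrand : ∫ r in Ioi (0 : ℝ), radialIntegrand r = -√3 / 135 := by
  rw [integral_Ioi_of_hasDerivAt_of_tendsto' (fun r _ => hasDerivAt_radialPrimitive r)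
    integrableOn_radialIntegrand tendsto_radialPrimitive]
  simp [radialPrimitive]

/-- `∫_{ℝ³} V ΛW ≠ 0` with `V = 5W⁴`. -/
theorem integral_V_LamW_ne_zero :
    (∫ x : Fin 3 → ℝ, (5 * (W x) ^ 4) * LamW x) ≠ 0 := by
  have hball : 0 < volume.real (Metric.ball (0 : EuclideanSpace ℝ (Fin 3)) 1) :=
    ENNReal.toReal_pos (Metric.measure_ball_pos volume 0 one_pos).ne' measure_ball_lt_top.ne
  simp_rw [V_mul_LamW_eq, integral_const_mul]
  rw [integral_fun_sum_sq fun s => (1 - 3 * s) * bubbleProfile s ^ 7, Fintype.card_fin]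
  have hradial : ∫ r in Ioi (0 : ℝ), r ^ (3 - 1) • ((1 - 3 * r ^ 2) * bubbleProfile (r ^ 2) ^ 7) =
      -√3 / 135 :=
    integral_radialIntegrand
  rw [hradial, smul_eq_mul, nsmul_eq_mul]
  exact mul_ne_zero (by positivity) (mul_ne_zero (by norm_num) (mul_ne_zero hball.ne' (by simp)))
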